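/- Let S = ⟨d_1,…,d_m⟩ be a numerical semigroup. Then ℂ_{m+3}(S) = (−1)^m · ((m+3)!/3!) · π_m · K_3, where K_3 = G_3 + (3/2)σ_1·G_2 + ((3σ_1² + σ_2)/4)·G_1 + (σ_1(σ_1² + σ_2)/8)·G_0 + (15δ_1⁴ + 30δ_1²δ_2 + 5δ_2² − 2δ_4)/60, with δ_p = (σ_p − 1)/2^p. -/

import Mathlib

open Polynomial PowerSeries Finset


noncomputable def Eb (x : ℚ) : PowerSeries ℚ :=
  PowerSeries.mk fun k => x ^ (k + 1) / (Nat.factorial (k + 1) : ℚ)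

lemma coeff_Eb (x : ℚ) (k : ℕ) :
    PowerSeries.coeff k (Eb x) = x ^ (k + 1) / (Nat.factorial (k + 1) : ℚ) :=
  PowerSeries.coeff_mk _ _

lemma X_mul_Eb (x : ℚ) :
    (PowerSeries.X : PowerSeries ℚ) * Eb x = PowerSeries.rescale x (PowerSeries.exp ℚ) - 1 := by
  ext n
  cases n with
  | zero =>
      rw [map_sub]
      rw [PowerSeries.coeff_zero_X_mul]
      rw [show ((PowerSeries.coeff 0) ((rescale x) (exp ℚ)))
        = x ^ 0 * PowerSeries.coeff 0 (exp ℚ) from PowerSeries.coeff_rescale _ _ _]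
      simp [PowerSeries.coeff_exp]
  | succ n =>
      rw [map_sub, PowerSeries.coeff_succ_X_mul, coeff_Eb,
        PowerSeries.coeff_rescale, PowerSeries.coeff_exp]
      simp [div_eq_mul_inv]

lemma coeff_mul_expand (f g : PowerSeries ℚ) (n : ℕ) :
    PowerSeries.coeff n (f * g)
      = ∑ i ∈ Finset.range (n + 1),
          PowerSeries.coeff i f * PowerSeries.coeff (n - i) g := by
  rw [PowerSeries.coeff_mul, Finset.Nat.sum_antidiagonal_eq_sum_range_succ_mk]

lemma prodEb_coeff {ι : Type*} [DecidableEq ι] (c : ι → ℚ) (s : Finset ι) :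
    (PowerSeries.coeff 0 (∏ j ∈ s, Eb (c j)) = ∏ j ∈ s, c j)
    ∧ (PowerSeries.coeff 1 (∏ j ∈ s, Eb (c j))
        = (∏ j ∈ s, c j) * ((∑ j ∈ s, c j) / 2))
    ∧ (PowerSeries.coeff 2 (∏ j ∈ s, Eb (c j))
        = (∏ j ∈ s, c j) * ((∑ j ∈ s, c j ^ 2) / 24 + (∑ j ∈ s, c j) ^ 2 / 8))
    ∧ (PowerSeries.coeff 3 (∏ j ∈ s, Eb (c j))
        = (∏ j ∈ s, c j) * (((∑ j ∈ s, c j) * (∑ j ∈ s, c j ^ 2)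
            + (∑ j ∈ s, c j) ^ 3) / 48))
    ∧ (PowerSeries.coeff 4 (∏ j ∈ s, Eb (c j))
        = (∏ j ∈ s, c j) * (-(∑ j ∈ s, c j ^ 4) / 2880 + (∑ j ∈ s, c j ^ 2) ^ 2 / 1152
            + (∑ j ∈ s, c j) ^ 2 * (∑ j ∈ s, c j ^ 2) / 192 + (∑ j ∈ s, c j) ^ 4 / 384)) := by
  classical
  induction s using Finset.induction_on with
  | empty => simp [PowerSeries.coeff_one]
  | insert _ _ hx ih =>
      rename_i a s
      obtain ⟨h0, h1, h2, h3, h4⟩ := ih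
      rw [Finset.prod_insert hx]
      simp only [Finset.prod_insert hx, Finset.sum_insert hx]
      refine ⟨?_, ?_, ?_, ?_, ?_⟩ <;>
        · rw [coeff_mul_expand]
          simp only [Finset.sum_range_succ, Finset.sum_range_zero, coeff_Eb]
          norm_num [Nat.factorial, h0, h1, h2, h3, h4]
          try ring

lemma constantCoeff_Eb_one : PowerSeries.constantCoeff (Eb 1) = 1 := by
  rw [← PowerSeries.coeff_zero_eq_constantCoeff]
  simp [coeff_Eb]

lemma Eb_one_mul_inv : Eb 1 * (Eb 1)⁻¹ = 1 := by
  refine PowerSeries.mul_inv_cancel _ ?_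
  rw [constantCoeff_Eb_one]; norm_num

lemma coeff_inv_Eb :
    PowerSeries.coeff 0 (Eb 1)⁻¹ = 1 ∧ PowerSeries.coeff 1 (Eb 1)⁻¹ = -(1/2)
    ∧ PowerSeries.coeff 2 (Eb 1)⁻¹ = 1/12 ∧ PowerSeries.coeff 3 (Eb 1)⁻¹ = 0
    ∧ PowerSeries.coeff 4 (Eb 1)⁻¹ = -(1/720) := by
  have h : ∀ n, PowerSeries.coeff n (Eb 1 * (Eb 1)⁻¹) = PowerSeries.coeff n 1 := by
    rw [Eb_one_mul_inv]; intro n; rfl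
  have h0 := h 0; have h1 := h 1; have h2 := h 2; have h3 := h 3; have h4 := h 4
  rw [coeff_mul_expand] at h0 h1 h2 h3 h4
  simp only [Finset.sum_range_succ, Finset.sum_range_zero, coeff_Eb,
    PowerSeries.coeff_one] at h0 h1 h2 h3 h4
  norm_num [Nat.factorial, constantCoeff_Eb_one] at h1 h2 h3 h4
  have w0 : PowerSeries.coeff 0 (Eb 1)⁻¹ = 1 := by
    rw [PowerSeries.coeff_zero_eq_constantCoeff, PowerSeries.constantCoeff_inv,
      constantCoeff_Eb_one]; norm_num
  refine ⟨w0, by linarith, by linarith, by linarith, by linarith⟩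

lemma coePS_sub (p q : Polynomial ℚ) :
    ((p - q : Polynomial ℚ) : PowerSeries ℚ) = (p : PowerSeries ℚ) - (q : PowerSeries ℚ) := by
  rw [← Polynomial.coeToPowerSeries.ringHom_apply, map_sub]
  simp

lemma coePS_prod {ι : Type*} (s : Finset ι) (f : ι → Polynomial ℚ) :
    ((∏ j ∈ s, f j : Polynomial ℚ) : PowerSeries ℚ)
      = ∏ j ∈ s, ((f j : Polynomial ℚ) : PowerSeries ℚ) := by
  rw [← Polynomial.coeToPowerSeries.ringHom_apply, map_prod]
  simp

/-- `ℂ_{m+3}(S) = (−1)^m ((m+3)!/3!) π_m K₃` with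
`K₃ = G₃ + (3/2)σ₁G₂ + ((3σ₁² + σ₂)/4)G₁ + (σ₁(σ₁² + σ₂)/8)G₀
      + (15δ₁⁴ + 30δ₁²δ₂ + 5δ₂² − 2δ₄)/60`, `δ_p = (σ_p − 1)/2^p`. -/
theorem alternating_power_sum_degree_m_add_three
    (m : ℕ) (d : Fin m → ℕ) (hd : ∀ j, 0 < d j)
    (hgcd : Finset.univ.gcd d = 1)
    (S : Set ℕ) (hS : S = {n : ℕ | ∃ a : Fin m → ℕ, n = ∑ j, a j * d j})
    (Δ : Set ℕ) (hΔ : Δ = {n : ℕ | 0 < n ∧ n ∉ S})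
    (hfin : Δ.Finite)
    (H : PowerSeries ℚ)
    (hH : H = PowerSeries.mk (Set.indicator S (fun _ => (1 : ℚ))))
    (Q : Polynomial ℚ)
    (hQ : (Q : PowerSeries ℚ)
      = H * ∏ j, (1 - (PowerSeries.X : PowerSeries ℚ) ^ (d j)))
    (CC : ℕ → ℚ)
    (hCC : ∀ n : ℕ, CC n
      = -∑ s ∈ Q.support.filter (fun s => 1 ≤ s), Q.coeff s * (s : ℚ) ^ n)
    (σ1 σ2 σ4 δ1 δ2 δ4 G0 G1 G2 G3 : ℚ)
    (hσ1 : σ1 = ∑ j, (d j : ℚ)) (hσ2 : σ2 = ∑ j, (d j : ℚ) ^ 2)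
    (hσ4 : σ4 = ∑ j, (d j : ℚ) ^ 4)
    (hδ1 : δ1 = (σ1 - 1) / 2) (hδ2 : δ2 = (σ2 - 1) / 4)
    (hδ4 : δ4 = (σ4 - 1) / 16)
    (hG0 : G0 = (hfin.toFinset.card : ℚ))
    (hG1 : G1 = ∑ s ∈ hfin.toFinset, (s : ℚ))
    (hG2 : G2 = ∑ s ∈ hfin.toFinset, (s : ℚ) ^ 2)
    (hG3 : G3 = ∑ s ∈ hfin.toFinset, (s : ℚ) ^ 3) :
    CC (m + 3) = (-1 : ℚ) ^ m * ((Nat.factorial (m + 3) : ℚ) / Nat.factorial 3)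
      * (∏ j, (d j : ℚ))
      * (G3 + 3 / 2 * σ1 * G2 + (3 * σ1 ^ 2 + σ2) / 4 * G1
          + σ1 * (σ1 ^ 2 + σ2) / 8 * G0
          + (15 * δ1 ^ 4 + 30 * δ1 ^ 2 * δ2 + 5 * δ2 ^ 2 - 2 * δ4) / 60) := by
  classical
  subst hσ1 hσ2 hσ4 hδ1 hδ2 hδ4 hG0 hG1 hG2 hG3
  obtain ⟨k, rfl⟩ : ∃ k, m = k + 1 := by
    cases m with
    | zero => simp at hgcd
    | succ k => exact ⟨k, rfl⟩
  set Δf : Finset ℕ := hfin.toFinset with hΔf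
  set P : Polynomial ℚ := ∑ s ∈ Δf, Polynomial.X ^ s with hP
  set F : PowerSeries ℚ := Polynomial.aeval (PowerSeries.exp ℚ) Q with hFdef
  set PPa : PowerSeries ℚ := ∑ s ∈ Δf, PowerSeries.rescale (s : ℚ) (PowerSeries.exp ℚ)
    with hPPadef
  set G : PowerSeries ℚ := ∏ j, Eb ((d j : ℚ)) with hGdef
  have hzero : (0:ℕ) ∈ S := by rw [hS]; exact ⟨fun _ => 0, by simp⟩
  -- Step A : H + P = geometric series
  have hHP : H + (P : PowerSeries ℚ) = PowerSeries.mk fun _ => (1:ℚ) := by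
    ext n
    rw [map_add, hH, PowerSeries.coeff_mk, PowerSeries.coeff_mk, Polynomial.coeff_coe, hP,
      Polynomial.finset_sum_coeff]
    simp only [Polynomial.coeff_X_pow]
    rw [Finset.sum_ite_eq Δf n fun _ => (1:ℚ)]
    by_cases hn : n ∈ S
    · have hnΔ : n ∉ Δf := by
        rw [hΔf, Set.Finite.mem_toFinset, hΔ]
        exact fun hc => hc.2 hn
      simp [Set.indicator_of_mem hn, hnΔ]
    · have hn0 : 0 < n := Nat.pos_of_ne_zero (by rintro rfl; exact hn hzero)
      have hnΔ : n ∈ Δf := by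
        rw [hΔf, Set.Finite.mem_toFinset, hΔ]; exact ⟨hn0, hn⟩
      simp [Set.indicator_of_notMem hn, hnΔ]
  -- Step B : (1 - X) * geometric = 1
  have hgeo : ((1 : PowerSeries ℚ) - PowerSeries.X) * PowerSeries.mk (fun _ => (1:ℚ)) = 1 := by
    ext n
    rw [sub_mul, one_mul, map_sub]
    cases n with
    | zero => simp
    | succ n => simp [PowerSeries.coeff_succ_X_mul, PowerSeries.coeff_one]
  -- Step C : polynomial identity
  have hPS : ((1 - Polynomial.X) * Q : Polynomial ℚ)
      = (1 - (1 - Polynomial.X) * P) * ∏ j, (1 - Polynomial.X ^ (d j)) := by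
    apply (Polynomial.coe_inj).mp
    simp only [Polynomial.coe_mul, coePS_sub, Polynomial.coe_one, Polynomial.coe_X,
      Polynomial.coe_pow, coePS_prod]
    rw [hQ]
    linear_combination (∏ j, ((1 : PowerSeries ℚ) - PowerSeries.X ^ (d j)))
      * ((1 - PowerSeries.X) * hHP + hgeo)
  -- Step D : apply aeval at exp
  have haev := congrArg (Polynomial.aeval (PowerSeries.exp ℚ)) hPS
  simp only [map_mul, map_sub, map_one, map_prod, map_pow, map_sum, Polynomial.aeval_X, hP,
    PowerSeries.exp_pow_eq_rescale_exp] at haev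
  rw [← hPPadef, ← hFdef] at haev
  -- rewrite 1 - exp pieces
  have hx1 : (1 : PowerSeries ℚ) - PowerSeries.exp ℚ = -(PowerSeries.X * Eb 1) := by
    rw [X_mul_Eb, PowerSeries.rescale_one]; simp
  have hprod : (∏ j : Fin (k+1), ((1:PowerSeries ℚ) - rescale ((d j : ℚ)) (PowerSeries.exp ℚ)))
      = (-1)^(k+1) * (PowerSeries.X^(k+1) * G) := by
    have : ∀ j : Fin (k+1), ((1:PowerSeries ℚ) - rescale ((d j : ℚ)) (PowerSeries.exp ℚ))
        = (-1) * (PowerSeries.X * Eb (d j)) := by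
      intro j; rw [X_mul_Eb]; ring
    rw [Finset.prod_congr rfl fun j _ => this j, Finset.prod_mul_distrib,
      Finset.prod_mul_distrib, Finset.prod_const, Finset.prod_const, Finset.card_univ,
      Fintype.card_fin, hGdef]
  -- main equation
  have hEbF : Eb 1 * F
      = (-1)^k * (PowerSeries.X^k * ((1 + PowerSeries.X * Eb 1 * PPa) * G)) := by
    apply mul_left_cancel₀ (PowerSeries.X_ne_zero : (PowerSeries.X : PowerSeries ℚ) ≠ 0)
    rw [hx1, hprod] at haev
    linear_combination (-1 : PowerSeries ℚ) * haev
  obtain ⟨w0, w1, w2, w3, w4⟩ := coeff_inv_Eb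
  have hinv' : (Eb 1)⁻¹ * Eb 1 = 1 := by rw [mul_comm]; exact Eb_one_mul_inv
  have hFeq : F = (-1)^k * (PowerSeries.X^k
      * ((Eb 1)⁻¹ * G + PowerSeries.X * (PPa * G))) := by
    calc F = ((Eb 1)⁻¹ * Eb 1) * F := by rw [hinv', one_mul]
      _ = (Eb 1)⁻¹ * (Eb 1 * F) := by ring
      _ = (Eb 1)⁻¹ * ((-1)^k * (PowerSeries.X^k
            * ((1 + PowerSeries.X * Eb 1 * PPa) * G))) := by rw [hEbF]
      _ = (-1)^k * (PowerSeries.X^k * ((Eb 1)⁻¹ * G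
            + ((Eb 1)⁻¹ * Eb 1) * (PowerSeries.X * (PPa * G)))) := by ring
      _ = _ := by rw [hinv', one_mul]
  -- coefficient extraction
  have hC : ((-1 : PowerSeries ℚ))^k = PowerSeries.C ((-1 : ℚ)^k) := by
    rw [map_pow, map_neg, map_one]
  have hcoF : PowerSeries.coeff (k+1+3) F
      = (-1)^k * (PowerSeries.coeff 4 ((Eb 1)⁻¹ * G)
        + PowerSeries.coeff 3 (PPa * G)) := by
    rw [hFeq, hC, PowerSeries.coeff_C_mul]
    rw [show k+1+3 = 4+k from by omega, PowerSeries.coeff_X_pow_mul]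
    rw [map_add, show (4:ℕ) = 3+1 from rfl, PowerSeries.coeff_succ_X_mul]
  -- PPa coefficients
  have hPPa : ∀ n, PowerSeries.coeff n PPa
      = (∑ s ∈ Δf, (s:ℚ)^n) / (Nat.factorial n : ℚ) := by
    intro n
    rw [hPPadef, map_sum, Finset.sum_div]
    refine Finset.sum_congr rfl fun s _ => ?_
    rw [PowerSeries.coeff_rescale, PowerSeries.coeff_exp]
    simp [div_eq_mul_inv]
  obtain ⟨g0, g1, g2, g3, g4⟩ := prodEb_coeff (fun j : Fin (k+1) => (d j : ℚ)) Finset.univ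
  rw [← hGdef] at g0 g1 g2 g3 g4
  -- CC in terms of coefficient of F
  have hFc : PowerSeries.coeff (k+1+3) F
      = ∑ s ∈ Finset.range (Q.natDegree + 1),
          Q.coeff s * ((s:ℚ)^(k+1+3) / (Nat.factorial (k+1+3) : ℚ)) := by
    rw [hFdef, Polynomial.aeval_eq_sum_range, map_sum]
    refine Finset.sum_congr rfl fun s _ => ?_
    rw [PowerSeries.coeff_smul, PowerSeries.exp_pow_eq_rescale_exp, PowerSeries.coeff_rescale,
      PowerSeries.coeff_exp]
    simp [smul_eq_mul]
    try ring
    try tauto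
  have hsum : ∑ s ∈ Q.support.filter (fun s => 1 ≤ s), Q.coeff s * (s:ℚ)^(k+1+3)
      = ∑ s ∈ Finset.range (Q.natDegree + 1), Q.coeff s * (s:ℚ)^(k+1+3) := by
    refine Finset.sum_subset
      (subset_trans (Finset.filter_subset _ _) Polynomial.supp_subset_range_natDegree_succ)
      fun x hx hx' => ?_
    by_cases hxs : x ∈ Q.support
    · have hx1 : ¬ 1 ≤ x := fun h => hx' (Finset.mem_filter.mpr ⟨hxs, h⟩)
      have : x = 0 := by omega
      subst this
      simp
    · simp [Polynomial.notMem_support_iff.mp hxs]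
  have hCCF : CC (k+1+3) = -((Nat.factorial (k+1+3) : ℚ)) * PowerSeries.coeff (k+1+3) F := by
    rw [hCC, hsum, hFc, Finset.mul_sum, ← Finset.sum_neg_distrib]
    refine Finset.sum_congr rfl fun s _ => ?_
    have hfac : (Nat.factorial (k+1+3) : ℚ) ≠ 0 := by
      exact_mod_cast Nat.factorial_ne_zero _
    rw [div_eq_mul_inv]
    linear_combination (Q.coeff s * (s:ℚ)^(k+1+3)) * mul_inv_cancel₀ hfac
  -- put it together
  rw [hCCF, hcoF]
  rw [coeff_mul_expand ((Eb 1)⁻¹) G 4, coeff_mul_expand PPa G 3]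
  simp only [Finset.sum_range_succ, Finset.sum_range_zero]
  norm_num [w0, w1, w2, w3, w4, g0, g1, g2, g3, g4, hPPa, Nat.factorial]
  have hcard : ((Δf.card : ℕ) : ℚ) = ∑ s ∈ Δf, (s:ℚ)^0 := by simp
  rw [hcard]
  have hm1 : ((-1:ℚ))^(k+1) = -(-1:ℚ)^k := by ring
  rw [hm1]
  field_simp
  ring
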